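/- arXiv:1101.1998 — 3 statements merged into one kernel-verified Lean document; each statement's English description precedes it below -/
import Mathlib

section
/- For b ∈ k^×, let ℬ(b) = k⟨x_1,x_2,x_3⟩/(x_2x_1 + x_1x_2, x_3x_2 + b^{-1}x_3x_1 - x_1x_3 - b x_2x_3, x_3^2x_1 - b^2 x_1x_3^2, x_3x_1^2 + b^3 x_1x_2x_3 - b x_1x_3x_1 - b^2 x_2x_3x_1). Then the map x_1 ↦ b x_2, x_2 ↦ b^{-1} x_1, x_3 ↦ x_3 extends to a graded k-algebra automorphism of ℬ(b). -/
/-!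
The substitution `x₁ ↦ b x₂, x₂ ↦ b⁻¹ x₁, x₃ ↦ x₃` carries the first two defining relations
of `ℬ(b)` to multiples of themselves. The images of the last two are consequences of the
relations: the third follows from the second and third, and the fourth from the second together
with the cubic identity `x₃x₁x₂ = -b² x₁x₂x₃` (obtained from the first, second and fourth
relations). Hence the substitution defines an algebra endomorphism of `ℬ(b)`, which is an
involution on the generators and therefore an automorphism.
-/

noncomputable section

/-- An element `y` of a ring is *normal* if `yA = Ay`. -/
def IsNormalElem {A : Type*} [Mul A] (y : A) : Prop :=
  (∀ a : A, ∃ b : A, y * a = b * y) ∧ (∀ a : A, ∃ b : A, a * y = y * b)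

open FreeAlgebra

variable (k : Type) [Field k]

/-- Generators of the free algebra on three variables. -/
abbrev X (i : Fin 3) : FreeAlgebra k (Fin 3) := FreeAlgebra.ι k i

inductive relB (b : k) : FreeAlgebra k (Fin 3) → FreeAlgebra k (Fin 3) → Prop
  | r1 : relB b (X k 1 * X k 0)
      (-(X k 0 * X k 1))
  | r2 : relB b (X k 2 * X k 1)
      (-b⁻¹ • (X k 2 * X k 0) + X k 0 * X k 2 + b • (X k 1 * X k 2))
  | r3 : relB b (X k 2 * X k 2 * X k 0)
      (b ^ 2 • (X k 0 * (X k 2 * X k 2)))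
  | r4 : relB b (X k 2 * (X k 0 * X k 0))
      (-(b ^ 3) • (X k 0 * X k 1 * X k 2) + b • (X k 0 * X k 2 * X k 0) + b ^ 2 • (X k 1 * X k 2 * X k 0))

/-- The algebra `ℬ(b)`. -/
abbrev AlgB (b : k) := RingQuot (relB k b)

/-- The images of the generators in `ℬ(b)`. -/
abbrev genB (b : k) (i : Fin 3) : AlgB k b := RingQuot.mkAlgHom k (relB k b) (X k i)

section Relations

variable {k} {A : Type*} [Ring A] [Algebra k A]

structure SatisfiesRelB (b : k) (x y z : A) : Prop where
  rel1 : y * x = -(x * y)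
  rel2 : z * y = -b⁻¹ • (z * x) + x * z + b • (y * z)
  rel3 : z * z * x = b ^ 2 • (x * (z * z))
  rel4 : z * (x * x) = -(b ^ 3) • (x * y * z) + b • (x * z * x) + b ^ 2 • (y * z * x)

namespace SatisfiesRelB

variable {b : k} {x y z : A}

theorem z_mul_x_mul_y (h : SatisfiesRelB b x y z) (hb : b ≠ 0) :
    z * (x * y) = -(b ^ 2) • (x * (y * z)) := by
  have zyx : z * (y * x) = -b⁻¹ • (z * (x * x)) + x * (z * x) + b • (y * (z * x)) := by
    rw [← mul_assoc, h.rel2]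
    simp only [add_mul, smul_mul_assoc, mul_assoc]
  calc z * (x * y) = -(z * (y * x)) := by rw [h.rel1, mul_neg, neg_neg]
    _ = -(b ^ 2) • (x * (y * z)) := by
      rw [zyx, h.rel4]
      simp only [mul_assoc, smul_add, smul_smul]
      match_scalars <;> field_simp <;> ring

theorem swap (h : SatisfiesRelB b x y z) (hb : b ≠ 0) :
    SatisfiesRelB b (b • y) (b⁻¹ • x) z where
  rel1 := by
    simp only [smul_mul_smul_comm, h.rel1, smul_neg, neg_neg, mul_comm b⁻¹ b]
  rel2 := by
    simp only [mul_smul_comm, smul_mul_assoc, smul_smul, h.rel2]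
    match_scalars <;> field_simp <;> ring
  rel3 := by
    have zzy : z * (z * y) = b ^ 2 • (y * (z * z)) := by
      rw [h.rel2]
      simp only [mul_add, mul_smul_comm, ← mul_assoc, h.rel3, h.rel2]
      simp only [add_mul, smul_mul_assoc, mul_assoc, smul_add, smul_smul]
      match_scalars <;> field_simp <;> ring
    simp only [mul_smul_comm, smul_mul_assoc, smul_smul, mul_assoc, zzy]
    match_scalars
    ring
  rel4 := by
    have zyy : z * (y * y) = b • (x * (y * z)) + b • (y * (z * y)) + x * (z * y) := by
      conv_lhs => rw [← mul_assoc, h.rel2]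
      simp only [add_mul, smul_mul_assoc, mul_assoc, h.z_mul_x_mul_y hb, smul_smul]
      match_scalars <;> field_simp
    have yxz : y * (x * z) = -(x * (y * z)) := by rw [← mul_assoc, h.rel1, neg_mul, mul_assoc]
    simp only [mul_smul_comm, smul_mul_assoc, smul_smul, mul_assoc, zyy, yxz, smul_neg]
    match_scalars <;> field_simp

end SatisfiesRelB

end Relations

section Quotient

variable {k} {A : Type*} [Ring A] [Algebra k A] {b : k}

theorem SatisfiesRelB.lift_eq_of_relB {x y z : A} (h : SatisfiesRelB b x y z)
    ⦃u v : FreeAlgebra k (Fin 3)⦄ (huv : relB k b u v) :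
    lift k ![x, y, z] u = lift k ![x, y, z] v := by
  cases huv <;> simp [h.rel1, h.rel2, h.rel3, h.rel4]

def liftB {x y z : A} (h : SatisfiesRelB b x y z) : AlgB k b →ₐ[k] A :=
  RingQuot.liftAlgHom k ⟨lift k ![x, y, z], h.lift_eq_of_relB⟩

theorem liftB_genB {x y z : A} (h : SatisfiesRelB b x y z) (i : Fin 3) :
    liftB h (genB k b i) = ![x, y, z] i := by
  simp [liftB, RingQuot.liftAlgHom_mkAlgHom_apply]

theorem satisfiesRelB_genB : SatisfiesRelB b (genB k b 0) (genB k b 1) (genB k b 2) where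
  rel1 := by simpa only [map_add, map_mul, map_smul, map_neg] using
    RingQuot.mkAlgHom_rel k (relB.r1 (b := b))
  rel2 := by simpa only [map_add, map_mul, map_smul, map_neg] using
    RingQuot.mkAlgHom_rel k (relB.r2 (b := b))
  rel3 := by simpa only [map_add, map_mul, map_smul, map_neg] using
    RingQuot.mkAlgHom_rel k (relB.r3 (b := b))
  rel4 := by simpa only [map_add, map_mul, map_smul, map_neg] using
    RingQuot.mkAlgHom_rel k (relB.r4 (b := b))

theorem AlgB.algHom_ext {f g : AlgB k b →ₐ[k] A} (h : ∀ i, f (genB k b i) = g (genB k b i)) :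
    f = g :=
  RingQuot.ringQuot_ext' _ _ _ (FreeAlgebra.hom_ext (funext h))

end Quotient

section Swap

variable {k} {b : k}

def swapB (hb : b ≠ 0) : AlgB k b →ₐ[k] AlgB k b :=
  liftB (satisfiesRelB_genB.swap hb)

theorem swapB_genB (hb : b ≠ 0) (i : Fin 3) :
    swapB hb (genB k b i) = ![b • genB k b 1, b⁻¹ • genB k b 0, genB k b 2] i :=
  liftB_genB _ i

theorem swapB_comp_swapB (hb : b ≠ 0) : (swapB hb).comp (swapB hb) = AlgHom.id k (AlgB k b) :=
  AlgB.algHom_ext fun i => by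
    fin_cases i <;> simp [swapB_genB, smul_smul, hb]

end Swap

/-- for `b ≠ 0`, the map `x₁ ↦ b x₂, x₂ ↦ b⁻¹x₁, x₃ ↦ x₃` extends to a graded
algebra automorphism of `ℬ(b)`. -/
theorem auto_of_B (b : k) (hb : b ≠ 0) :
    ∃ σ : AlgB k b ≃ₐ[k] AlgB k b,
      σ (genB k b 0) = b • genB k b 1 ∧
      σ (genB k b 1) = b⁻¹ • genB k b 0 ∧
      σ (genB k b 2) = genB k b 2 :=
  ⟨AlgEquiv.ofAlgHom (swapB hb) (swapB hb) (swapB_comp_swapB hb) (swapB_comp_swapB hb),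
    swapB_genB hb 0, swapB_genB hb 1, swapB_genB hb 2⟩
end
end

section
/- Let ℰ = ℰ(1,γ) = k⟨x_1,x_2,x_3⟩/(x_2x_1 + x_1x_2, x_3x_2 + x_3x_1 - x_1x_3 - x_2x_3, x_3^2x_1 - x_2x_3^2, x_3x_1^2 - γ x_1x_2x_3 - x_1x_3x_1 - x_2x_3x_1) with γ^2 = -1. Then x_1x_2, x_3^2, and x_1^2 + x_2^2 are normal elements of ℰ. -/
/-!
Normality only has to be checked against the generators `x₁, x₂, x₃`, and there it comes
down to explicit identities in any ring satisfying the relations: `x₁² + x₂²` is central by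
the first two relations, `x₃²` swaps `x₁` and `x₂` by the second and third, and `x₁x₂`
twists `x₃` into `γx₃` by the first, second and fourth, together with `γ² = -1`.
-/

noncomputable section

open FreeAlgebra

variable (k : Type) [Field k]

/-- The defining relations of `ℰ(1,γ)` (with `γ² = -1`). -/
inductive relE (g : k) : FreeAlgebra k (Fin 3) → FreeAlgebra k (Fin 3) → Prop
  | r1 : relE g (X k 1 * X k 0) (-(X k 0 * X k 1))
  | r2 : relE g (X k 2 * X k 1) (-(X k 2 * X k 0) + X k 0 * X k 2 + X k 1 * X k 2)
  | r3 : relE g (X k 2 * X k 2 * X k 0) (X k 1 * (X k 2 * X k 2))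
  | r4 : relE g (X k 2 * (X k 0 * X k 0))
      (g • (X k 0 * X k 1 * X k 2) + X k 0 * X k 2 * X k 0 + X k 1 * X k 2 * X k 0)

/-- The algebra `ℰ(1,γ)`. -/
abbrev AlgE (g : k) := RingQuot (relE k g)

/-- The images of the generators in `ℰ(1,γ)`. -/
abbrev genE (g : k) (i : Fin 3) : AlgE k g := RingQuot.mkAlgHom k (relE k g) (X k i)

section Normality

variable {A : Type*}

theorem isNormalElem_of_adjoin_eq_top {R : Type*} [CommSemiring R] [Semiring A]
    [Algebra R A] {s : Set A} (hs : Algebra.adjoin R s = ⊤) {y : A}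
    (h : ∀ x ∈ s, (∃ z, y * x = z * y) ∧ ∃ z, x * y = y * z) : IsNormalElem y := by
  refine ⟨fun x => ?_, fun x => ?_⟩
  · induction (hs ▸ Algebra.mem_top : x ∈ Algebra.adjoin R s) using Algebra.adjoin_induction with
    | mem x hx => exact (h x hx).1
    | algebraMap r => exact ⟨algebraMap R A r, (Algebra.commutes r y).symm⟩
    | add x x' _ _ hx hx' =>
      obtain ⟨z, hz⟩ := hx
      obtain ⟨z', hz'⟩ := hx'
      exact ⟨z + z', by rw [mul_add, add_mul, hz, hz']⟩
    | mul x x' _ _ hx hx' =>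
      obtain ⟨z, hz⟩ := hx
      obtain ⟨z', hz'⟩ := hx'
      exact ⟨z * z', by rw [← mul_assoc, hz, mul_assoc, hz', mul_assoc]⟩
  · induction (hs ▸ Algebra.mem_top : x ∈ Algebra.adjoin R s) using Algebra.adjoin_induction with
    | mem x hx => exact (h x hx).2
    | algebraMap r => exact ⟨algebraMap R A r, Algebra.commutes r y⟩
    | add x x' _ _ hx hx' =>
      obtain ⟨z, hz⟩ := hx
      obtain ⟨z', hz'⟩ := hx'
      exact ⟨z + z', by rw [mul_add, add_mul, hz, hz']⟩
    | mul x x' _ _ hx hx' =>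
      obtain ⟨z, hz⟩ := hx
      obtain ⟨z', hz'⟩ := hx'
      exact ⟨z * z', by rw [mul_assoc, hz', ← mul_assoc, hz, mul_assoc]⟩

theorem Commute.exists_mul_eq_mul [Mul A] {y x : A} (h : Commute y x) :
    (∃ z, y * x = z * y) ∧ ∃ z, x * y = y * z :=
  ⟨⟨x, h.eq⟩, ⟨x, h.eq.symm⟩⟩

variable [Ring A] {a b c : A}

theorem normalizes_mul_self_add_mul_self (h₁ : b * a = -(a * b))
    (h₂ : c * b = -(c * a) + a * c + b * c) :
    ∀ x ∈ ({a, b, c} : Set A),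
      (∃ z, (a * a + b * b) * x = z * (a * a + b * b)) ∧
        ∃ z, x * (a * a + b * b) = (a * a + b * b) * z := by
  rintro x (rfl | rfl | rfl) <;> apply Commute.exists_mul_eq_mul <;> show _ = _
  · linear_combination (norm := noncomm_ring) b * h₁ - h₁ * b
  · linear_combination (norm := noncomm_ring) a * h₁ - h₁ * a
  · linear_combination (norm := noncomm_ring)
      x * h₁ - h₁ * x - h₂ * a - h₂ * b - a * h₂ - b * h₂

theorem normalizes_mul_self (h₂ : c * b = -(c * a) + a * c + b * c)
    (h₃ : c * c * a = b * (c * c)) :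
    ∀ x ∈ ({a, b, c} : Set A), (∃ z, c * c * x = z * (c * c)) ∧ ∃ z, x * (c * c) = c * c * z := by
  have hb : c * c * b = a * (c * c) := by
    linear_combination (norm := noncomm_ring) c * h₂ + h₂ * c - h₃
  rintro x (rfl | rfl | rfl)
  · exact ⟨⟨b, h₃⟩, ⟨b, hb.symm⟩⟩
  · exact ⟨⟨a, hb⟩, ⟨a, h₃.symm⟩⟩
  · exact ((Commute.refl x).mul_left (Commute.refl x)).exists_mul_eq_mul

theorem normalizes_mul {G : A} (hG : ∀ x, Commute G x) (hGG : G * G = -1)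
    (h₁ : b * a = -(a * b)) (h₂ : c * b = -(c * a) + a * c + b * c)
    (h₄ : c * (a * a) = G * (a * b * c) + a * c * a + b * c * a) :
    ∀ x ∈ ({a, b, c} : Set A), (∃ z, a * b * x = z * (a * b)) ∧ ∃ z, x * (a * b) = a * b * z := by
  have hc : c * (a * b) = G * (a * b * c) := by
    linear_combination (norm := noncomm_ring) c * h₁ - h₂ * a + h₄
  rintro x (rfl | rfl | rfl)
  · exact ⟨⟨-x, by linear_combination (norm := noncomm_ring) x * h₁⟩,
      ⟨-x, by linear_combination (norm := noncomm_ring) x * h₁⟩⟩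
  · exact ⟨⟨-x, by linear_combination (norm := noncomm_ring) h₁ * x⟩,
      ⟨-x, by linear_combination (norm := noncomm_ring) h₁ * x⟩⟩
  · exact ⟨⟨-(G * x), by linear_combination (norm := noncomm_ring) G * hc + hGG * (a * b * x)⟩,
      ⟨G * x, by linear_combination (norm := noncomm_ring) hc + (hG (a * b)).eq * x⟩⟩

end Normality

theorem adjoin_genE_eq_top (g : k) :
    Algebra.adjoin k {genE k g 0, genE k g 1, genE k g 2} = ⊤ := by
  have : {genE k g 0, genE k g 1, genE k g 2} =
      RingQuot.mkAlgHom k (relE k g) '' Set.range (ι k) := by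
    ext; simp [Fin.exists_fin_succ, eq_comm]
  rw [this, Algebra.adjoin_image, adjoin_range_ι, Algebra.map_top, AlgHom.range_eq_top]
  exact RingQuot.mkAlgHom_surjective k (relE k g)

/-- in `ℰ = ℰ(1,γ)` with `γ² = -1`, the elements `x₁x₂`, `x₃²` and
`x₁² + x₂²` are all normal. -/
theorem normal_elems_in_E (g : k) (hg : g ^ 2 = -1) :
    IsNormalElem (genE k g 0 * genE k g 1) ∧
    IsNormalElem (genE k g 2 * genE k g 2) ∧
    IsNormalElem (genE k g 0 * genE k g 0 + genE k g 1 * genE k g 1) := by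
  set G := algebraMap k (AlgE k g) g
  have hGG : G * G = -1 := by rw [← map_mul, ← sq, hg, map_neg, map_one]
  have h₁ := RingQuot.mkAlgHom_rel k (relE.r1 (g := g))
  have h₂ := RingQuot.mkAlgHom_rel k (relE.r2 (g := g))
  have h₃ := RingQuot.mkAlgHom_rel k (relE.r3 (g := g))
  have h₄ := RingQuot.mkAlgHom_rel k (relE.r4 (g := g))
  simp only [map_mul, map_neg, map_add, Algebra.smul_def, AlgHom.commutes] at h₁ h₂ h₃ h₄
  have hgen := adjoin_genE_eq_top k g
  exact ⟨isNormalElem_of_adjoin_eq_top hgen (normalizes_mul (Algebra.commutes g) hGG h₁ h₂ h₄),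
    isNormalElem_of_adjoin_eq_top hgen (normalizes_mul_self h₂ h₃),
    isNormalElem_of_adjoin_eq_top hgen (normalizes_mul_self_add_mul_self h₁ h₂)⟩
end
end

section
/- Let A be an algebra with an automorphism φ and let A^φ denote the graded twist of A by φ, with multiplication x ⋆ y = x·φ^m(y) for x ∈ A_m. For b ∈ k^×, the algebra 𝒜(b,q) of family 𝒜 is isomorphic to a graded twist of 𝒜(1,q): explicitly, if φ is the automorphism of 𝒜(1,q) with x_1 ↦ x_1, x_2 ↦ x_2, x_3 ↦ b^{-1}x_3, then the graded twist of 𝒜(1,q) by φ, after the change of variable replacing x_1 by b x_1, has exactly the defining relations of 𝒜(b,q). -/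
noncomputable section

open FreeAlgebra

variable (k : Type) [Field k]

/-- The defining relations of the algebra `𝒜(b,q)` of family `𝒜`. -/
inductive relA (b q : k) : FreeAlgebra k (Fin 3) → FreeAlgebra k (Fin 3) → Prop
  | r1 : relA b q (X k 1 * X k 0) (q⁻¹ • (X k 0 * X k 1))
  | r2 : relA b q (X k 2 * X k 1)
      (-(q ^ 2 * b)⁻¹ • (X k 2 * X k 0) + X k 0 * X k 2 + b • (X k 1 * X k 2))
  | r3 : relA b q (X k 2 * X k 2 * X k 0)
      (-(q ^ 3 * b ^ 2) • (X k 0 * (X k 2 * X k 2)) + ((q ^ 2 + q) * b) • (X k 2 * X k 0 * X k 2))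
  | r4 : relA b q (X k 2 * (X k 0 * X k 0))
      (-(q ^ 3 * b ^ 2) • (X k 0 * X k 0 * X k 2) + ((q ^ 2 + q) * b) • (X k 0 * X k 2 * X k 0))

/-- The algebra `𝒜(b,q)`. -/
abbrev AlgA (b q : k) := RingQuot (relA k b q)

/-- The images of the generators `x₁, x₂, x₃` in `𝒜(b,q)`. -/
abbrev genA (b q : k) (i : Fin 3) : AlgA k b q := RingQuot.mkAlgHom k (relA k b q) (X k i)

/-! The scaling `x₃ ↦ c x₃` preserves each defining relation of `𝒜(b,q)`, since every relation is
homogeneous in `x₃`; for `c ≠ 0` it is therefore a graded automorphism. Taking `c = b⁻¹` on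
`𝒜(1,q)`, each twisted product of the variables `b x₁, x₂, x₃` is a scalar multiple of the
corresponding untwisted product of `x₁, x₂, x₃`, and the scalars are exactly those that turn
the relations of `𝒜(1,q)` into those of `𝒜(b,q)`. -/

section GradedTwist

variable {k} {b q : k}

theorem genA_r1 : genA k b q 1 * genA k b q 0 = q⁻¹ • (genA k b q 0 * genA k b q 1) := by
  simpa only [map_mul, map_smul] using RingQuot.mkAlgHom_rel k (relA.r1 (b := b) (q := q))

theorem genA_r2 : genA k b q 2 * genA k b q 1 =
    -(q ^ 2 * b)⁻¹ • (genA k b q 2 * genA k b q 0) + genA k b q 0 * genA k b q 2 +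
      b • (genA k b q 1 * genA k b q 2) := by
  simpa only [map_mul, map_smul, map_add] using RingQuot.mkAlgHom_rel k (relA.r2 (b := b) (q := q))

theorem genA_r3 : genA k b q 2 * (genA k b q 2 * genA k b q 0) =
    -(q ^ 3 * b ^ 2) • (genA k b q 0 * (genA k b q 2 * genA k b q 2)) +
      ((q ^ 2 + q) * b) • (genA k b q 2 * (genA k b q 0 * genA k b q 2)) := by
  simpa only [map_mul, map_smul, map_add, mul_assoc] using
    RingQuot.mkAlgHom_rel k (relA.r3 (b := b) (q := q))

theorem genA_r4 : genA k b q 2 * (genA k b q 0 * genA k b q 0) =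
    -(q ^ 3 * b ^ 2) • (genA k b q 0 * (genA k b q 0 * genA k b q 2)) +
      ((q ^ 2 + q) * b) • (genA k b q 0 * (genA k b q 2 * genA k b q 0)) := by
  simpa only [map_mul, map_smul, map_add, mul_assoc] using
    RingQuot.mkAlgHom_rel k (relA.r4 (b := b) (q := q))

theorem AlgA.algHom_ext {B : Type*} [Semiring B] [Algebra k B] {f g : AlgA k b q →ₐ[k] B}
    (h : ∀ i, f (genA k b q i) = g (genA k b q i)) : f = g :=
  RingQuot.ringQuot_ext' k f g (FreeAlgebra.hom_ext (funext h))

variable (b q) in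
def scaleX3Free (c : k) : FreeAlgebra k (Fin 3) →ₐ[k] AlgA k b q :=
  FreeAlgebra.lift k ![genA k b q 0, genA k b q 1, c • genA k b q 2]

theorem scaleX3Free_rel (c : k) ⦃u v : FreeAlgebra k (Fin 3)⦄ (h : relA k b q u v) :
    scaleX3Free b q c u = scaleX3Free b q c v := by
  cases h <;>
    simp only [scaleX3Free, map_mul, map_smul, map_add, lift_ι_apply, Matrix.cons_val_zero,
      Matrix.cons_val_one, Matrix.cons_val_two, Matrix.head_cons, Matrix.tail_cons,
      smul_mul_assoc, mul_smul_comm, smul_smul, mul_assoc]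
  · rw [genA_r1]
  · rw [genA_r2]; module
  · rw [genA_r3]; module
  · rw [genA_r4]; module

variable (b q) in
def scaleX3 (c : k) : AlgA k b q →ₐ[k] AlgA k b q :=
  RingQuot.liftAlgHom k ⟨scaleX3Free b q c, scaleX3Free_rel c⟩

theorem scaleX3_genA (c : k) (i : Fin 3) :
    scaleX3 b q c (genA k b q i) = ![genA k b q 0, genA k b q 1, c • genA k b q 2] i := by
  rw [scaleX3, genA, RingQuot.liftAlgHom_mkAlgHom_apply, scaleX3Free, lift_ι_apply]

@[simp]
theorem scaleX3_genA_zero (c : k) : scaleX3 b q c (genA k b q 0) = genA k b q 0 :=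
  scaleX3_genA c 0

@[simp]
theorem scaleX3_genA_one (c : k) : scaleX3 b q c (genA k b q 1) = genA k b q 1 :=
  scaleX3_genA c 1

@[simp]
theorem scaleX3_genA_two (c : k) : scaleX3 b q c (genA k b q 2) = c • genA k b q 2 :=
  scaleX3_genA c 2

theorem scaleX3_comp (c d : k) : (scaleX3 b q c).comp (scaleX3 b q d) = scaleX3 b q (c * d) :=
  AlgA.algHom_ext fun i => by
    fin_cases i <;> simp [smul_smul, mul_comm]

theorem scaleX3_one : scaleX3 b q (1 : k) = AlgHom.id k (AlgA k b q) :=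
  AlgA.algHom_ext fun i => by
    fin_cases i <;> simp

variable (b q) in
def scaleX3Equiv {c : k} (hc : c ≠ 0) : AlgA k b q ≃ₐ[k] AlgA k b q :=
  AlgEquiv.ofAlgHom (scaleX3 b q c) (scaleX3 b q c⁻¹)
    (by rw [scaleX3_comp, mul_inv_cancel₀ hc, scaleX3_one])
    (by rw [scaleX3_comp, inv_mul_cancel₀ hc, scaleX3_one])

@[simp]
theorem scaleX3Equiv_apply {c : k} (hc : c ≠ 0) (x : AlgA k b q) :
    scaleX3Equiv b q hc x = scaleX3 b q c x :=
  rfl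

end GradedTwist

theorem A_is_graded_twist (b q : k) (hb : b ≠ 0) :
    ∃ φ : AlgA k 1 q ≃ₐ[k] AlgA k 1 q,
      φ (genA k 1 q 0) = genA k 1 q 0 ∧
      φ (genA k 1 q 1) = genA k 1 q 1 ∧
      φ (genA k 1 q 2) = b⁻¹ • genA k 1 q 2 ∧
      -- notation for the twisted variables
      (∀ y₁ y₂ y₃ : AlgA k 1 q,
        y₁ = b • genA k 1 q 0 → y₂ = genA k 1 q 1 → y₃ = genA k 1 q 2 →
        -- r1 of 𝒜(b,q):  y₂ ⋆ y₁ = q⁻¹ (y₁ ⋆ y₂)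
        (y₂ * φ y₁ = q⁻¹ • (y₁ * φ y₂)) ∧
        -- r2 of 𝒜(b,q):  y₃ ⋆ y₂ = -(q²b)⁻¹ (y₃ ⋆ y₁) + y₁ ⋆ y₃ + b (y₂ ⋆ y₃)
        (y₃ * φ y₂ =
          -(q ^ 2 * b)⁻¹ • (y₃ * φ y₁) + y₁ * φ y₃ + b • (y₂ * φ y₃)) ∧
        -- r3 of 𝒜(b,q):  y₃ ⋆ y₃ ⋆ y₁ = -q³b² (y₁ ⋆ y₃ ⋆ y₃) + (q²+q)b (y₃ ⋆ y₁ ⋆ y₃)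
        (y₃ * φ y₃ * φ (φ y₁) =
          -(q ^ 3 * b ^ 2) • (y₁ * φ y₃ * φ (φ y₃)) +
            ((q ^ 2 + q) * b) • (y₃ * φ y₁ * φ (φ y₃))) ∧
        -- r4 of 𝒜(b,q):  y₃ ⋆ y₁ ⋆ y₁ = -q³b² (y₁ ⋆ y₁ ⋆ y₃) + (q²+q)b (y₁ ⋆ y₃ ⋆ y₁)
        (y₃ * φ y₁ * φ (φ y₁) =
          -(q ^ 3 * b ^ 2) • (y₁ * φ y₁ * φ (φ y₃)) +
            ((q ^ 2 + q) * b) • (y₁ * φ y₃ * φ (φ y₁)))) := by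
  refine ⟨scaleX3Equiv 1 q (inv_ne_zero hb), by simp, by simp, by simp, ?_⟩
  rintro _ _ _ rfl rfl rfl
  simp only [scaleX3Equiv_apply, map_smul, scaleX3_genA_zero, scaleX3_genA_one, scaleX3_genA_two,
    smul_mul_assoc, mul_smul_comm, smul_smul, mul_assoc]
  refine ⟨?r1, ?r2, ?r3, ?r4⟩
  · rw [genA_r1]
    module
  · rw [genA_r2]
    match_scalars <;> field_simp
  · rw [genA_r3]
    match_scalars <;> field_simp
  · rw [genA_r4]
    match_scalars <;> field_simp
end
end
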